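/- arXiv:0909.1792 — 4 statements merged into one kernel-verified Lean document; each statement's English description precedes it below -/
import Mathlib

section
/- Let u > 0 be a real number and let n_0, n be integers with 1 ≤ n_0 ≤ n. In a homogeneous system with common bandwidth u, the one-to-one single-chunk delay is D_1(n) = (1/u)·⌈log_2(n/n_0)⌉ and the many-to-one delay is D_m(n) = (1/u)·Σ_{k=n_0}^{n-1} 1/k; they satisfy D_m(n) ≤ D_1(n) < 1/u + D_m(n)/ln(2), i.e. (1/u)·Σ_{k=n_0}^{n-1} 1/k ≤ (1/u)·⌈log_2(n/n_0)⌉ < 1/u + (1/(u·ln 2))·Σ_{k=n_0}^{n-1} 1/k. -/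
/-!
The harmonic sum `∑_{m ≤ k < n} 1/k` is squeezed between `log (n / m)`, by telescoping
`log (k + 1) - log k ≤ 1 / k`, and the number `⌈log₂ (n / m)⌉` of doublings that lead from `m`
past `n`, since each block `[j, 2j)` contributes at most `1`.
-/

open Finset Real

theorem log_div_le_sum_Ico_inv {m n : ℕ} (hm : 0 < m) (hmn : m ≤ n) :
    log ((n : ℝ) / m) ≤ ∑ k ∈ Ico m n, (1 : ℝ) / k := by
  induction n, hmn using Nat.le_induction with
  | base => simp [div_self (Nat.cast_pos.mpr hm : (0 : ℝ) < m).ne']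
  | succ n hmn ih =>
    have hn : (0 : ℝ) < n := by exact_mod_cast hm.trans_le hmn
    have hstep : log (((n + 1 : ℕ) : ℝ) / n) ≤ 1 / n := by
      calc log (((n + 1 : ℕ) : ℝ) / n) ≤ ((n + 1 : ℕ) : ℝ) / n - 1 :=
            log_le_sub_one_of_pos (by positivity)
        _ = 1 / n := by field_simp; push_cast; ring
    have hsplit :
        log (((n + 1 : ℕ) : ℝ) / m) = log ((n : ℝ) / m) + log (((n + 1 : ℕ) : ℝ) / n) := by
      rw [← log_mul (by positivity) (by positivity), div_mul_div_comm, mul_comm (n : ℝ),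
        mul_div_mul_right _ _ hn.ne']
    rw [sum_Ico_succ_top hmn, hsplit]
    linarith

theorem sum_Ico_two_mul_inv_le_one {m : ℕ} (hm : 0 < m) :
    ∑ k ∈ Ico m (2 * m), (1 : ℝ) / k ≤ 1 := by
  have hm' : (0 : ℝ) < m := by exact_mod_cast hm
  calc ∑ k ∈ Ico m (2 * m), (1 : ℝ) / k ≤ ∑ _k ∈ Ico m (2 * m), (1 : ℝ) / m :=
        sum_le_sum fun k hk =>
          one_div_le_one_div_of_le hm' (by exact_mod_cast (mem_Ico.mp hk).1)
    _ = 1 := by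
        rw [sum_const, Nat.card_Ico, show 2 * m - m = m by omega, nsmul_eq_mul]
        field_simp

theorem sum_Ico_mul_two_pow_inv_le {m : ℕ} (hm : 0 < m) (c : ℕ) :
    ∑ k ∈ Ico m (m * 2 ^ c), (1 : ℝ) / k ≤ c := by
  induction c with
  | zero => simp
  | succ c ih =>
    have hle : m ≤ m * 2 ^ c := Nat.le_mul_of_pos_right _ (by positivity)
    have hdouble : m * 2 ^ (c + 1) = 2 * (m * 2 ^ c) := by ring
    rw [← sum_Ico_consecutive _ hle (by rw [hdouble]; omega), hdouble]
    have := sum_Ico_two_mul_inv_le_one (hm.trans_le hle)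
    push_cast
    linarith

theorem sum_Ico_inv_le_ceil_logb {m n : ℕ} (hm : 0 < m) (hmn : m ≤ n) :
    ∑ k ∈ Ico m n, (1 : ℝ) / k ≤ ⌈logb 2 ((n : ℝ) / m)⌉ := by
  have hm' : (0 : ℝ) < m := by exact_mod_cast hm
  have hratio : (1 : ℝ) ≤ n / m := by rw [one_le_div hm']; exact_mod_cast hmn
  set c := ⌈logb 2 ((n : ℝ) / m)⌉₊
  have hreach : n ≤ m * 2 ^ c := by
    have h : (n : ℝ) / m ≤ 2 ^ (c : ℝ) :=
      (logb_le_iff_le_rpow one_lt_two (by positivity)).mp (Nat.le_ceil _)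
    rw [rpow_natCast, div_le_iff₀ hm'] at h
    exact_mod_cast h.trans_eq (mul_comm _ _)
  calc ∑ k ∈ Ico m n, (1 : ℝ) / k ≤ ∑ k ∈ Ico m (m * 2 ^ c), (1 : ℝ) / k :=
        sum_le_sum_of_subset_of_nonneg (Ico_subset_Ico_right hreach) fun _ _ _ => by positivity
    _ ≤ c := sum_Ico_mul_two_pow_inv_le hm c
    _ = ⌈logb 2 ((n : ℝ) / m)⌉ := natCast_ceil_eq_intCast_ceil (logb_nonneg one_lt_two hratio)

theorem ceil_logb_lt_one_add_sum_Ico_inv_div_log {m n : ℕ} (hm : 0 < m) (hmn : m ≤ n) :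
    (⌈logb 2 ((n : ℝ) / m)⌉ : ℝ) < 1 + (∑ k ∈ Ico m n, (1 : ℝ) / k) / log 2 := by
  have hlogb : logb 2 ((n : ℝ) / m) ≤ (∑ k ∈ Ico m n, (1 : ℝ) / k) / log 2 :=
    div_le_div_of_nonneg_right (log_div_le_sum_Ico_inv hm hmn) (log_pos one_lt_two).le
  linarith [Int.ceil_lt_add_one (logb 2 ((n : ℝ) / m))]

/-- Conjecture 1 of the paper in the homogeneous case: with common bandwidth
`u > 0` and `1 ≤ n0 ≤ n`, the one-to-one delay `D_1(n) = (1/u)·⌈log₂(n/n0)⌉`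
and the many-to-one delay `D_m(n) = (1/u)·∑_{k=n0}^{n-1} 1/k` satisfy
`D_m(n) ≤ D_1(n) < 1/u + D_m(n)/ln 2`. -/
theorem homogeneous_one_to_one_delay_bounds
    (u : ℝ) (hu : 0 < u) (n0 n : ℕ) (hn0 : 1 ≤ n0) (hn0n : n0 ≤ n) :
    (1 / u) * (∑ k ∈ Finset.Ico n0 n, (1 : ℝ) / (k : ℝ)) ≤
      (1 / u) * (⌈Real.logb 2 ((n : ℝ) / (n0 : ℝ))⌉ : ℝ) ∧
    (1 / u) * (⌈Real.logb 2 ((n : ℝ) / (n0 : ℝ))⌉ : ℝ) <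
      1 / u + (1 / (u * Real.log 2)) * (∑ k ∈ Finset.Ico n0 n, (1 : ℝ) / (k : ℝ)) := by
  have hu' : 0 < 1 / u := one_div_pos.mpr hu
  refine ⟨mul_le_mul_of_nonneg_left (sum_Ico_inv_le_ceil_logb hn0 hn0n) hu'.le, ?_⟩
  calc (1 / u) * (⌈logb 2 ((n : ℝ) / n0)⌉ : ℝ)
      < (1 / u) * (1 + (∑ k ∈ Ico n0 n, (1 : ℝ) / k) / log 2) :=
        mul_lt_mul_of_pos_left (ceil_logb_lt_one_add_sum_Ico_inv_div_log hn0 hn0n) hu'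
    _ = 1 / u + (1 / (u * log 2)) * ∑ k ∈ Ico n0 n, (1 : ℝ) / k := by ring
end

section
/- Let u > 0 be a real number, c ≥ 1 an integer, and n_0, n integers with 1 ≤ n_0 ≤ n. In a homogeneous system with common bandwidth u, the one-to-c single-chunk delay is D_c(n) = (c/u)·⌈log_{1+c}(n/n_0)⌉ and the many-to-one delay is D_m(n) = (1/u)·Σ_{k=n_0}^{n-1} 1/k; they satisfy D_m(n) ≤ D_c(n) < c/u + (c/ln(1+c))·D_m(n), i.e. (1/u)·Σ_{k=n_0}^{n-1} 1/k ≤ (c/u)·⌈log_{1+c}(n/n_0)⌉ < c/u + (c/(u·ln(1+c)))·Σ_{k=n_0}^{n-1} 1/k. -/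
/-! The blocks `[n0 (1+c)^j, n0 (1+c)^(j+1))` each contribute at most `c` to the harmonic sum
`∑_{k=n0}^{n-1} 1/k`, and `⌈log_{1+c}(n/n0)⌉` of them cover `[n0, n)`: this is the lower bound.
For the upper bound, `log (1 + 1/k) ≤ 1/k` makes the harmonic sum dominate `log (n/n0)`, and
`⌈L⌉ < L + 1` with `L = log (n/n0) / log (1+c)`. -/

open Finset Real

theorem sum_Ico_one_div_le_card_div {a b : ℕ} (ha : 0 < a) :
    ∑ k ∈ Ico a b, (1 : ℝ) / k ≤ (b - a : ℕ) / a := by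
  have hterm : ∀ k ∈ Ico a b, (1 : ℝ) / k ≤ 1 / a := fun k hk =>
    one_div_le_one_div_of_le (by positivity) (by exact_mod_cast (mem_Ico.1 hk).1)
  calc ∑ k ∈ Ico a b, (1 : ℝ) / k ≤ #(Ico a b) • ((1 : ℝ) / a) := sum_le_card_nsmul _ _ _ hterm
    _ = (b - a : ℕ) / a := by rw [Nat.card_Ico, nsmul_eq_mul, mul_one_div]

theorem sum_Ico_one_div_mul_pow_le (c : ℕ) {a : ℕ} (ha : 0 < a) (m : ℕ) :
    ∑ k ∈ Ico a (a * (1 + c) ^ m), (1 : ℝ) / k ≤ c * m := by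
  induction m with
  | zero => simp
  | succ m ih =>
    set b := a * (1 + c) ^ m
    have hb : 0 < b := by positivity
    have hab : a ≤ b := Nat.le_mul_of_pos_right a (by positivity)
    have hblock : ∑ k ∈ Ico b (b * (1 + c)), (1 : ℝ) / k ≤ c := by
      refine (sum_Ico_one_div_le_card_div hb).trans_eq ?_
      rw [show b * (1 + c) - b = b * c by rw [mul_add, mul_one, Nat.add_sub_cancel_left]]
      push_cast
      field_simp
    rw [pow_succ, ← mul_assoc, ← sum_Ico_consecutive _ hab (Nat.le_mul_of_pos_right b (by omega))]
    push_cast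
    linarith

theorem le_mul_pow_natCeil_logb {c : ℕ} (hc : 0 < c) {a : ℕ} (ha : 0 < a) (n : ℕ) :
    n ≤ a * (1 + c) ^ ⌈logb (1 + c) ((n : ℝ) / a)⌉₊ := by
  rcases n.eq_zero_or_pos with rfl | hn
  · exact Nat.zero_le _
  have hb : 1 < 1 + (c : ℝ) := lt_add_of_pos_right 1 (by exact_mod_cast hc)
  have hx : (n : ℝ) / a ≤ (1 + c) ^ ⌈logb (1 + c) ((n : ℝ) / a)⌉₊ := by
    rw [← rpow_natCast, ← logb_le_iff_le_rpow hb (by positivity)]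
    exact Nat.le_ceil _
  rw [div_le_iff₀' (by positivity)] at hx
  exact_mod_cast hx

theorem sum_Ico_one_div_le_mul_natCeil_logb {c : ℕ} (hc : 0 < c) {a : ℕ} (ha : 0 < a) (n : ℕ) :
    ∑ k ∈ Ico a n, (1 : ℝ) / k ≤ c * ⌈logb (1 + c) ((n : ℝ) / a)⌉₊ :=
  calc ∑ k ∈ Ico a n, (1 : ℝ) / k
      ≤ ∑ k ∈ Ico a (a * (1 + c) ^ ⌈logb (1 + c) ((n : ℝ) / a)⌉₊), (1 : ℝ) / k :=
        sum_le_sum_of_subset_of_nonneg (Ico_subset_Ico_right (le_mul_pow_natCeil_logb hc ha n))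
          fun _ _ _ => by positivity
    _ ≤ _ := sum_Ico_one_div_mul_pow_le c ha _

theorem log_div_le_sum_Ico_one_div {a b : ℕ} (ha : 0 < a) (hab : a ≤ b) :
    log ((b : ℝ) / a) ≤ ∑ k ∈ Ico a b, (1 : ℝ) / k := by
  induction b, hab using Nat.le_induction with
  | base => simp [div_self (show (a : ℝ) ≠ 0 by positivity)]
  | succ b hab ih =>
    have hb : (0 : ℝ) < b := by exact_mod_cast ha.trans_le hab
    have hstep : log (((b : ℝ) + 1) / b) ≤ 1 / b :=
      calc log (((b : ℝ) + 1) / b) ≤ (b + 1) / b - 1 := log_le_sub_one_of_pos (by positivity)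
        _ = 1 / b := by rw [add_div, div_self hb.ne', add_sub_cancel_left]
    have hsplit : ((b : ℝ) + 1) / a = b / a * ((b + 1) / b) := by
      field_simp
    rw [sum_Ico_succ_top hab, Nat.cast_succ, hsplit, log_mul (by positivity) (by positivity)]
    linarith

/-- Conjecture 2 of the paper in the homogeneous case: with common bandwidth
`u > 0`, parallelism degree `c ≥ 1`, and `1 ≤ n0 ≤ n`, the one-to-`c` delay
`D_c(n) = (c/u)·⌈log_{1+c}(n/n0)⌉` and the many-to-one delay
`D_m(n) = (1/u)·∑_{k=n0}^{n-1} 1/k` satisfy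
`D_m(n) ≤ D_c(n) < c/u + (c/ln(1+c))·D_m(n)`. -/
theorem homogeneous_one_to_c_delay_bounds
    (u : ℝ) (hu : 0 < u) (c : ℕ) (hc : 1 ≤ c)
    (n0 n : ℕ) (hn0 : 1 ≤ n0) (hn0n : n0 ≤ n) :
    (1 / u) * (∑ k ∈ Finset.Ico n0 n, (1 : ℝ) / (k : ℝ)) ≤
      ((c : ℝ) / u) * (⌈Real.logb (1 + (c : ℝ)) ((n : ℝ) / (n0 : ℝ))⌉ : ℝ) ∧
    ((c : ℝ) / u) * (⌈Real.logb (1 + (c : ℝ)) ((n : ℝ) / (n0 : ℝ))⌉ : ℝ) <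
      (c : ℝ) / u + ((c : ℝ) / (u * Real.log (1 + (c : ℝ)))) *
        (∑ k ∈ Finset.Ico n0 n, (1 : ℝ) / (k : ℝ)) := by
  have hb : 1 < 1 + (c : ℝ) := lt_add_of_pos_right 1 (by exact_mod_cast hc)
  have hx : 1 ≤ (n : ℝ) / n0 := (one_le_div (by positivity)).2 (by exact_mod_cast hn0n)
  set L := logb (1 + (c : ℝ)) ((n : ℝ) / n0)
  set S := ∑ k ∈ Ico n0 n, (1 : ℝ) / k
  have hS_le : S ≤ c * ⌈L⌉ := by
    rw [← natCast_ceil_eq_intCast_ceil (logb_nonneg hb hx)]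
    exact sum_Ico_one_div_le_mul_natCeil_logb hc hn0 n
  have hlog_le : log ((n : ℝ) / n0) ≤ S := log_div_le_sum_Ico_one_div hn0 hn0n
  have hL : log ((n : ℝ) / n0) = L * log (1 + c) := (div_mul_cancel₀ _ (log_pos hb).ne').symm
  constructor
  · rw [one_div_mul_eq_div, div_mul_eq_mul_div]
    gcongr
  · have hlog_pos := log_pos hb
    calc (c : ℝ) / u * ⌈L⌉ < c / u * (L + 1) := by gcongr; exact Int.ceil_lt_add_one L
      _ = c / u + c / (u * log (1 + c)) * log ((n : ℝ) / n0) := by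
        rw [hL]; field_simp; ring
      _ ≤ c / u + c / (u * log (1 + c)) * S := by gcongr
end

section
/- Let u_1 ≥ u_2 ≥ ... ≥ u_N ≥ 0 be real numbers, let U_k = Σ_{i=1}^k u_i (with U_0 = 0), and let E, g be integers with 1 ≤ g ≤ E ≤ N. Then the total bandwidth of the peer group G_g = { i : 1 ≤ i ≤ N, i ≡ g (mod E) } satisfies Σ_{i ∈ G_g} u_i ≥ U_N/E − U_{E-1}. -/
/-!
Send each peer `j ≥ g` to the last member of `G_g` at or before it. Every member `i` of `G_g`
receives at most `E` peers (they lie in `[i, i + E)`), each with bandwidth at most `u i`, so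
`∑_{j ≥ g} u j ≤ E · ∑_{G_g} u`. The peers before `g` contribute at most `U_{E-1}`, and
`U_{E-1} / E ≤ U_{E-1}`.
-/

open Finset

theorem Finset.sum_le_nsmul_sum_of_card_fiber_le {ι κ M : Type*} [DecidableEq κ]
    [AddCommMonoid M] [PartialOrder M] [IsOrderedAddMonoid M]
    {s : Finset ι} {t : Finset κ} {f : ι → κ} {a : ι → M} {b : κ → M} {n : ℕ}
    (hf : ∀ j ∈ s, f j ∈ t) (hcard : ∀ i ∈ t, #{j ∈ s | f j = i} ≤ n)
    (hle : ∀ j ∈ s, a j ≤ b (f j)) (hb : ∀ i ∈ t, 0 ≤ b i) :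
    ∑ j ∈ s, a j ≤ n • ∑ i ∈ t, b i := by
  rw [← sum_fiberwise_of_maps_to hf, smul_sum]
  refine sum_le_sum fun i hi => ?_
  calc ∑ j ∈ s with f j = i, a j
      ≤ #{j ∈ s | f j = i} • b i :=
        sum_le_card_nsmul _ _ _ fun j hj => (mem_filter.1 hj).2 ▸ hle j (mem_filter.1 hj).1
    _ ≤ n • b i := nsmul_le_nsmul_left (hb i hi) (hcard i hi)

/-- For `g ≤ j`, the largest index `≤ j` that is congruent to `g` modulo `E`. -/
def groupRep (E g j : ℕ) : ℕ := g + E * ((j - g) / E)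

section groupRep

variable {E g j : ℕ}

theorem le_groupRep : g ≤ groupRep E g j := Nat.le_add_right _ _

theorem groupRep_le (h : g ≤ j) : groupRep E g j ≤ j := by
  have := Nat.div_add_mod (j - g) E
  unfold groupRep; omega

theorem lt_groupRep_add (hE : 0 < E) (h : g ≤ j) : j < groupRep E g j + E := by
  have := Nat.div_add_mod (j - g) E
  have := Nat.mod_lt (j - g) hE
  unfold groupRep; omega

theorem groupRep_mod : groupRep E g j % E = g % E := Nat.add_mul_mod_self_left _ _ _

end groupRep

theorem sum_filter_ge_le_mul_sum_filter_mod_eq {N E g : ℕ} {u : ℕ → ℝ}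
    (hanti : AntitoneOn u (Set.Icc 1 N)) (hnonneg : ∀ i ∈ Icc 1 N, 0 ≤ u i)
    (hE : 0 < E) (hg : 1 ≤ g) :
    ∑ j ∈ Icc 1 N with g ≤ j, u j ≤ E * ∑ i ∈ Icc 1 N with i % E = g % E, u i := by
  rw [← nsmul_eq_mul]
  refine sum_le_nsmul_sum_of_card_fiber_le (f := groupRep E g) ?maps ?card ?le
    fun i hi => hnonneg i (mem_filter.1 hi).1
  case maps =>
    intro j hj
    simp only [mem_filter, mem_Icc] at hj ⊢
    have := groupRep_le (E := E) hj.2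
    exact ⟨⟨hg.trans le_groupRep, by omega⟩, groupRep_mod⟩
  case card =>
    intro i _
    refine (card_le_card (t := Ico i (i + E)) fun j hj => ?_).trans (by simp)
    simp only [mem_filter, mem_Icc, mem_Ico] at hj ⊢
    have := groupRep_le (E := E) hj.1.2
    have := lt_groupRep_add hE hj.1.2
    omega
  case le =>
    intro j hj
    simp only [mem_filter, mem_Icc] at hj
    exact hanti ⟨hg.trans le_groupRep, (groupRep_le hj.2).trans hj.1.2⟩ ⟨hj.1.1, hj.1.2⟩
      (groupRep_le hj.2)

/-- Group bandwidth lower bound used in Theorem 5 of the paper: for a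
nonincreasing bandwidth sequence `u_1 ≥ ... ≥ u_N ≥ 0` with cumulative sums
`U_k = ∑_{i=1}^k u_i` and `1 ≤ g ≤ E ≤ N`, the group
`G_g = {i : 1 ≤ i ≤ N, i ≡ g (mod E)}` satisfies
`∑_{i ∈ G_g} u_i ≥ U_N/E − U_{E-1}`. -/
theorem group_bandwidth_ge_average_minus_prefix
    (N : ℕ) (u : ℕ → ℝ)
    (hmono : ∀ i j, 1 ≤ i → i ≤ j → j ≤ N → u j ≤ u i)
    (hnonneg : ∀ i, 1 ≤ i → i ≤ N → 0 ≤ u i)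
    (E g : ℕ) (hg : 1 ≤ g) (hgE : g ≤ E) (hEN : E ≤ N) :
    (∑ i ∈ Finset.Icc 1 N, u i) / (E : ℝ) - (∑ i ∈ Finset.Icc 1 (E - 1), u i) ≤
      ∑ i ∈ (Finset.Icc 1 N).filter (fun i => i % E = g % E), u i := by
  have hE : (1 : ℝ) ≤ E := by exact_mod_cast hg.trans hgE
  have hsplit := (sum_filter_add_sum_filter_not (Icc 1 N) (· < g) u).symm
  simp only [not_lt] at hsplit
  have hhead : ∑ i ∈ Icc 1 N with i < g, u i ≤ ∑ i ∈ Icc 1 (E - 1), u i :=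
    sum_le_sum_of_subset_of_nonneg (fun i hi => by simp only [mem_filter, mem_Icc] at hi ⊢; omega)
      fun i hi _ => hnonneg i (mem_Icc.1 hi).1 (by grind)
  have htail := sum_filter_ge_le_mul_sum_filter_mod_eq (E := E) (g := g)
    (fun i hi j hj hij => hmono i j hi.1 hij hj.2)
    (fun i hi => hnonneg i (mem_Icc.1 hi).1 (mem_Icc.1 hi).2) (by omega) hg
  have hprefix : 0 ≤ ∑ i ∈ Icc 1 (E - 1), u i :=
    sum_nonneg fun i hi => hnonneg i (mem_Icc.1 hi).1 (by grind)
  rw [sub_le_iff_le_add, div_le_iff₀ (by linarith)]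
  nlinarith [mul_nonneg hprefix (sub_nonneg.2 hE)]
end

section
/- Let n_0 ≥ 1 be an integer, V ≥ 0 and s > 0 real numbers, and N an integer with N > n_0 + 1 and (N - n_0 - 1)·(N - 1) ≥ n_0 + V + 1. Define the bandwidth sequence u_1 = (N - n_0 - 1)·s and u_i = (n_0 + V + 1)·s/(N - 1) for 2 ≤ i ≤ N. Then: (i) the sequence is nonincreasing (u_1 ≥ u_2 = ... = u_N > 0); (ii) Σ_{i=1}^N u_i = (N + V)·s, so the system is feasible with excess peer bandwidth V·s over the stream rate requirement N·s; (iii) n_0·s + u_1 = (N - 1)·s < N·s, so the source (of capacity n_0 chunks per second) together with peer 1 alone cannot sustain the stream; and (iv) for every i with 2 ≤ i ≤ N, the time 1/u_i for peer i to transmit one chunk equals (N - 1)/((n_0 + V + 1)·s), which grows linearly in N. -/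
/-!
Peer 1 carries `(N - n0 - 1)·s`, just short of what the source needs to reach the stream rate `N·s`,
while the remaining `N - 1` peers share the rest `(n0 + V + 1)·s` of the budget `(N + V)·s`
equally. Hence each of them gets only a `1/(N - 1)` fraction of a constant, and needs time
linear in `N` to upload a single chunk. Everything reduces to field arithmetic once one
notes that the sequence takes a value `a` at `1` and a constant value `b ≤ a` on `[2, N]`.
-/

open Finset

section HeadTail

variable {R : Type*} {u : ℕ → R} {N : ℕ} {a b : R}

lemma antitone_of_head_tail [Preorder R] (hu1 : u 1 = a) (hui : ∀ i, 2 ≤ i → i ≤ N → u i = b)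
    (hba : b ≤ a) : ∀ i j, 1 ≤ i → i ≤ j → j ≤ N → u j ≤ u i := by
  intro i j hi hij hjN
  rcases hi.eq_or_lt with rfl | hi
  · rcases hij.eq_or_lt with rfl | hij
    · exact le_rfl
    · rw [hui j hij hjN, hu1]
      exact hba
  · rw [hui j (hi.trans_le hij) hjN, hui i hi (hij.trans hjN)]

lemma sum_Icc_of_head_tail [Ring R] (hN : 1 ≤ N) (hu1 : u 1 = a)
    (hui : ∀ i, 2 ≤ i → i ≤ N → u i = b) :
    ∑ i ∈ Icc 1 N, u i = a + ((N : R) - 1) * b := by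
  have htail : ∑ i ∈ Ioc 1 N, u i = ∑ _i ∈ Ioc 1 N, b :=
    sum_congr rfl fun i hi => hui i (mem_Ioc.1 hi).1 (mem_Ioc.1 hi).2
  rw [← add_sum_Ioc_eq_sum_Icc hN, htail, sum_const, Nat.card_Ioc, nsmul_eq_mul,
    Nat.cast_sub hN, Nat.cast_one, hu1]

end HeadTail

theorem heterogeneity_curse_witness_general
    (n0 : ℕ) (V s : ℝ) (hV : 0 ≤ V) (hs : 0 < s)
    (N : ℕ) (hN : n0 + 1 < N)
    (hbig : ((n0 : ℝ) + V + 1) ≤ ((N : ℝ) - (n0 : ℝ) - 1) * ((N : ℝ) - 1))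
    (u : ℕ → ℝ)
    (hu1 : u 1 = ((N : ℝ) - (n0 : ℝ) - 1) * s)
    (hui : ∀ i, 2 ≤ i → i ≤ N → u i = ((n0 : ℝ) + V + 1) * s / ((N : ℝ) - 1)) :
    ((∀ i j, 1 ≤ i → i ≤ j → j ≤ N → u j ≤ u i) ∧
      (∀ i, 2 ≤ i → i ≤ N → 0 < u i)) ∧
    (∑ i ∈ Finset.Icc 1 N, u i) = ((N : ℝ) + V) * s ∧
    ((n0 : ℝ) * s + u 1 = ((N : ℝ) - 1) * s ∧ ((N : ℝ) - 1) * s < (N : ℝ) * s) ∧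
    (∀ i, 2 ≤ i → i ≤ N → 1 / u i = ((N : ℝ) - 1) / (((n0 : ℝ) + V + 1) * s)) := by
  have hN1 : (0 : ℝ) < N - 1 := by
    have : ((n0 + 1 : ℕ) : ℝ) < N := by exact_mod_cast hN
    push_cast at this
    linarith [n0.cast_nonneg (α := ℝ)]
  have hrate : (0 : ℝ) < n0 + V + 1 := by positivity
  have htail_le_head : ((n0 : ℝ) + V + 1) * s / (N - 1) ≤ ((N : ℝ) - n0 - 1) * s := by
    rw [div_le_iff₀ hN1]
    nlinarith [mul_le_mul_of_nonneg_right hbig hs.le]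
  refine ⟨⟨antitone_of_head_tail hu1 hui htail_le_head, fun i hi hiN => ?_⟩, ?_,
    ⟨by rw [hu1]; ring, by linarith⟩, fun i hi hiN => ?_⟩
  · rw [hui i hi hiN]
    positivity
  · rw [sum_Icc_of_head_tail (by omega) hu1 hui]
    field_simp
    ring
  · rw [hui i hi hiN, one_div, inv_div]

/-- Explicit witness construction in the proof of Theorem 4 of the paper:
with `u 1 = (N - n0 - 1)·s` and `u i = (n0 + V + 1)·s/(N - 1)` for
`2 ≤ i ≤ N`, (i) the sequence is nonincreasing and positive beyond the first
peer, (ii) `∑ u_i = (N + V)·s` (feasible with excess bandwidth `V·s`),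
(iii) `n0·s + u 1 = (N - 1)·s < N·s` (source plus peer 1 cannot sustain the
stream), and (iv) each peer `i ≥ 2` needs `1/u_i = (N-1)/((n0+V+1)·s)`
seconds per chunk, which is linear in `N`. -/
theorem heterogeneity_curse_witness
    (n0 : ℕ) (hn0 : 1 ≤ n0) (V s : ℝ) (hV : 0 ≤ V) (hs : 0 < s)
    (N : ℕ) (hN : n0 + 1 < N)
    (hbig : ((n0 : ℝ) + V + 1) ≤ ((N : ℝ) - (n0 : ℝ) - 1) * ((N : ℝ) - 1))
    (u : ℕ → ℝ)
    (hu1 : u 1 = ((N : ℝ) - (n0 : ℝ) - 1) * s)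
    (hui : ∀ i, 2 ≤ i → i ≤ N → u i = ((n0 : ℝ) + V + 1) * s / ((N : ℝ) - 1)) :
    ((∀ i j, 1 ≤ i → i ≤ j → j ≤ N → u j ≤ u i) ∧
      (∀ i, 2 ≤ i → i ≤ N → 0 < u i)) ∧
    (∑ i ∈ Finset.Icc 1 N, u i) = ((N : ℝ) + V) * s ∧
    ((n0 : ℝ) * s + u 1 = ((N : ℝ) - 1) * s ∧ ((N : ℝ) - 1) * s < (N : ℝ) * s) ∧
    (∀ i, 2 ≤ i → i ≤ N → 1 / u i = ((N : ℝ) - 1) / (((n0 : ℝ) + V + 1) * s)) :=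
  heterogeneity_curse_witness_general n0 V s hV hs N hN hbig u hu1 hui
end
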